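/- Under Assumption B1, suppose K, Q ∈ ℝ^{d×d_e} satisfy the alignment property: K = U_K Λ_K V^⊤ and Q = U_Q Λ_Q V^⊤ with U_K, U_Q ∈ ℝ^{d×d} and V ∈ ℝ^{d_e×d_e} orthogonal, Λ_K, Λ_Q ∈ ℝ^{d×d_e} diagonal, and the columns of U_K, U_Q satisfying x_{i,opt(i)}/‖x_{i,opt(i)}‖_2 = u^k_{π(i)} and z_i/‖z_i‖_2 = u^q_{π(i)} for all i ∈ [n] for some injective π : [n] → [d]. Then for each i ∈ [n] and each pair (l, l') from the pairing of the non-optimal tokens in Assumption B1(iii): x_{il}^⊤ K Q^⊤ z_i = x_{il'}^⊤ K Q^⊤ z_i, and hence S(X_i K Q^⊤ z_i)_l = S(X_i K Q^⊤ z_i)_{l'}. -/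

import Mathlib

open Real Filter Finset

noncomputable section

namespace AttnGF

/-- Softmax of a vector in `ℝ^L`. -/
def S {L : ℕ} (u : Fin L → ℝ) (l : Fin L) : ℝ := Real.exp (u l) / ∑ j, Real.exp (u j)

/-- Euclidean norm of a vector. -/
def l2 {d : ℕ} (x : Fin d → ℝ) : ℝ := Real.sqrt (∑ j, x j ^ 2)

/-- ℓ1 norm of a vector. -/
def l1 {d : ℕ} (x : Fin d → ℝ) : ℝ := ∑ j, |x j|

variable {n L d de : ℕ}

/-- Token scores γ_{il} = y_i v^⊤ x_{il}. -/
def gam (X : Fin n → Fin L → Fin d → ℝ) (y : Fin n → ℝ) (v : Fin d → ℝ)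
    (i : Fin n) (l : Fin L) : ℝ := y i * ∑ j, v j * X i l j

/-- g_i(β) = X_i (β ⊙ z_i) for the diagonal attention model. -/
def gD (X : Fin n → Fin L → Fin d → ℝ) (z : Fin n → Fin d → ℝ) (i : Fin n)
    (β : Fin d → ℝ) (l : Fin L) : ℝ := ∑ j, X i l j * (β j * z i j)

/-- Empirical exponential loss for the diagonal attention model. -/
def lossD (X : Fin n → Fin L → Fin d → ℝ) (z : Fin n → Fin d → ℝ)
    (y : Fin n → ℝ) (v : Fin d → ℝ) (β : Fin d → ℝ) : ℝ :=
  (1 / (n : ℝ)) * ∑ i, Real.exp (-(∑ l, gam X y v i l * S (gD X z i β) l))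

/-- Constraint vectors B_{il} = z_i ⊙ (x_{i,opt(i)} − x_{il}). -/
def Bv (X : Fin n → Fin L → Fin d → ℝ) (z : Fin n → Fin d → ℝ)
    (opt : Fin n → Fin L) (i : Fin n) (l : Fin L) (j : Fin d) : ℝ :=
  z i j * (X i (opt i) j - X i l j)

/-- (Σ(u) γ)_l where Σ(u) = Diag(S(u)) − S(u) S(u)^⊤. -/
def SigMul {L : ℕ} (u γv : Fin L → ℝ) (l : Fin L) : ℝ :=
  S u l * γv l - S u l * ∑ j, S u j * γv j

/-- j-th component of the gradient (partial derivative) of f at x. -/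
def pD {d : ℕ} (f : (Fin d → ℝ) → ℝ) (x : Fin d → ℝ) (j : Fin d) : ℝ :=
  fderiv ℝ f x (Pi.single j 1)

/-- Assumption A1. -/
def A1 (X : Fin n → Fin L → Fin d → ℝ) (y : Fin n → ℝ) (v : Fin d → ℝ)
    (opt : Fin n → Fin L) (nopt : Fin n → ℝ) : Prop :=
  ∀ i : Fin n, ∀ l : Fin L, l ≠ opt i →
    gam X y v i l < gam X y v i (opt i) ∧ gam X y v i l = nopt i

/-- Feasibility for the ℓ1-SVM. -/
def Feas (X : Fin n → Fin L → Fin d → ℝ) (z : Fin n → Fin d → ℝ)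
    (opt : Fin n → Fin L) (βf : Fin d → ℝ) : Prop :=
  ∀ i : Fin n, ∀ l : Fin L, l ≠ opt i → 1 ≤ ∑ j, βf j * Bv X z opt i l j

/-- Reparametrized gradient flow on (w₊, w₋). -/
def Flow (X : Fin n → Fin L → Fin d → ℝ) (z : Fin n → Fin d → ℝ)
    (y : Fin n → ℝ) (v : Fin d → ℝ) (wp wm : ℝ → Fin d → ℝ) : Prop :=
  ∀ t : ℝ, 0 ≤ t → ∀ j : Fin d,
    HasDerivAt (fun s => wp s j)
      (-(pD (fun u => lossD X z y v (fun k => (u k ^ 2 - wm t k ^ 2) / 2)) (wp t) j)) t ∧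
    HasDerivAt (fun s => wm s j)
      (-(pD (fun u => lossD X z y v (fun k => (wp t k ^ 2 - u k ^ 2) / 2)) (wm t) j)) t

/-- β(t) = (w₊(t)^{⊙2} − w₋(t)^{⊙2})/2. -/
def bCurve (wp wm : ℝ → Fin d → ℝ) (t : ℝ) (j : Fin d) : ℝ :=
  (wp t j ^ 2 - wm t j ^ 2) / 2

/-- Assumption A2 (initial loss bound). -/
def A2 (X : Fin n → Fin L → Fin d → ℝ) (z : Fin n → Fin d → ℝ)
    (y : Fin n → ℝ) (v : Fin d → ℝ) (opt : Fin n → Fin L) (nopt : Fin n → ℝ)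
    (β0 : Fin d → ℝ) : Prop :=
  ∀ jj : Fin n, lossD X z y v β0 ≤
    (Real.exp (-(nopt jj)) +
      ∑ i ∈ Finset.univ.erase jj, Real.exp (-(gam X y v i (opt i)))) / (n : ℝ)

/-- Margin μ(β) = min_{i, l ≠ opt(i)} β^⊤ B_{il}. -/
def margin (X : Fin n → Fin L → Fin d → ℝ) (z : Fin n → Fin d → ℝ)
    (opt : Fin n → Fin L) (β : Fin d → ℝ) : ℝ :=
  sInf {m : ℝ | ∃ i : Fin n, ∃ l : Fin L, l ≠ opt i ∧ m = ∑ j, β j * Bv X z opt i l j}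

/-- φ_{il}(t). -/
def phi (X : Fin n → Fin L → Fin d → ℝ) (z : Fin n → Fin d → ℝ)
    (y : Fin n → ℝ) (v : Fin d → ℝ) (β : ℝ → Fin d → ℝ) (i : Fin n) (l : Fin L)
    (t : ℝ) : ℝ :=
  -(2 / (n : ℝ)) * ∫ τ in (0:ℝ)..t,
    Real.exp (-(∑ l', gam X y v i l' * S (gD X z i (β τ)) l')) *
      SigMul (gD X z i (β τ)) (gam X y v i) l

/-- Dual variables λ_{il}(t) = φ_{il}(t) / ln μ(β(t)). -/
def lam (X : Fin n → Fin L → Fin d → ℝ) (z : Fin n → Fin d → ℝ)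
    (y : Fin n → ℝ) (v : Fin d → ℝ) (opt : Fin n → Fin L) (β : ℝ → Fin d → ℝ)
    (i : Fin n) (l : Fin L) (t : ℝ) : ℝ :=
  (1 / Real.log (margin X z opt (β t))) * phi X z y v β i l t

/-- g_i(K,Q) = X_i K Q^⊤ z_i for the full attention model. -/
def gM (X : Fin n → Fin L → Fin d → ℝ) (z : Fin n → Fin d → ℝ) (i : Fin n)
    (K Q : Fin d → Fin de → ℝ) (l : Fin L) : ℝ :=
  ∑ a, ∑ b, ∑ c, X i l a * K a b * Q c b * z i c

/-- Empirical exponential loss for the full attention model. -/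
def lossM (X : Fin n → Fin L → Fin d → ℝ) (z : Fin n → Fin d → ℝ)
    (y : Fin n → ℝ) (v : Fin d → ℝ) (K Q : Fin d → Fin de → ℝ) : ℝ :=
  (1 / (n : ℝ)) * ∑ i, Real.exp (-(∑ l, gam X y v i l * S (gM X z i K Q) l))

/-- Partial derivative of f with respect to the (a,b) entry of a matrix. -/
def pDM {d de : ℕ} (f : (Fin d → Fin de → ℝ) → ℝ) (M : Fin d → Fin de → ℝ)
    (a : Fin d) (b : Fin de) : ℝ :=
  fderiv ℝ f M (Pi.single a (Pi.single b 1))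

/-- Gradient flow on the key and query matrices. -/
def MFlow (X : Fin n → Fin L → Fin d → ℝ) (z : Fin n → Fin d → ℝ)
    (y : Fin n → ℝ) (v : Fin d → ℝ) (K Q : ℝ → Fin d → Fin de → ℝ) : Prop :=
  ∀ t : ℝ, 0 ≤ t → ∀ (a : Fin d) (b : Fin de),
    HasDerivAt (fun s => K s a b) (-(pDM (fun M => lossM X z y v M (Q t)) (K t) a b)) t ∧
    HasDerivAt (fun s => Q s a b) (-(pDM (fun M => lossM X z y v (K t) M) (Q t) a b)) t

/-- A rectangular matrix is diagonal: zero off the main diagonal. -/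
def RectDiag {d de : ℕ} (M : Fin d → Fin de → ℝ) : Prop :=
  ∀ (a : Fin d) (b : Fin de), (a : ℕ) ≠ (b : ℕ) → M a b = 0

/-- Orthogonality: U^⊤ U = 1. -/
def Orth {d : ℕ} (U : Fin d → Fin d → ℝ) : Prop :=
  ∀ j j' : Fin d, ∑ a, U a j * U a j' = (if j = j' then (1:ℝ) else 0)

/-- Assumption B1, with the pairing of non-optimal tokens given by the involution σ. -/
def B1 (X : Fin n → Fin L → Fin d → ℝ) (z : Fin n → Fin d → ℝ)
    (opt : Fin n → Fin L) (σ : Fin n → Fin L → Fin L) : Prop :=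
  (∀ i j : Fin n, i ≠ j →
    (∑ a, X i (opt i) a * X j (opt j) a = 0) ∧ (∑ a, z i a * z j a = 0)) ∧
  (∀ i, |∑ a, X i (opt i) a * z i a| = l2 (X i (opt i)) * l2 (z i)) ∧
  (∀ i, ∀ l, l ≠ opt i → σ i l ≠ opt i ∧ σ i l ≠ l ∧ σ i (σ i l) = l ∧
    ∃ c : ℝ, -1 ≤ c ∧ c < 1 ∧
      (∑ a, X i (opt i) a * (X i l a - X i (σ i l) a)) = 0 ∧
      (∀ a, X i l a + X i (σ i l) a = 2 * c * X i (opt i) a))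

/-- Rotated constraint vectors B̃_{il}. -/
def Btil (X : Fin n → Fin L → Fin d → ℝ) (z : Fin n → Fin d → ℝ)
    (opt : Fin n → Fin L) (pim : Fin n → Fin d) (i : Fin n) (l : Fin L) (j : Fin d) : ℝ :=
  Real.sign (∑ a, X i (opt i) a * z i a) * (∑ a, (X i (opt i) a - X i l a) * z i a) *
    (if j = pim i then 1 else 0)

/-- Margin with respect to the rotated constraints. -/
def marginB (X : Fin n → Fin L → Fin d → ℝ) (z : Fin n → Fin d → ℝ)
    (opt : Fin n → Fin L) (pim : Fin n → Fin d) (β : Fin d → ℝ) : ℝ :=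
  sInf {m : ℝ | ∃ i : Fin n, ∃ l : Fin L, l ≠ opt i ∧ m = ∑ j, β j * Btil X z opt pim i l j}

/-- Margin for a combined attention weight matrix. -/
def marginM (X : Fin n → Fin L → Fin d → ℝ) (z : Fin n → Fin d → ℝ)
    (opt : Fin n → Fin L) (W : Fin d → Fin d → ℝ) : ℝ :=
  sInf {m : ℝ | ∃ i : Fin n, ∃ l : Fin L, l ≠ opt i ∧
    m = ∑ a, ∑ c, (X i (opt i) a - X i l a) * W a c * z i c}

/-- Nuclear norm ‖W‖_* = trace((W^⊤W)^{1/2}). -/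
def nuclear {d : ℕ} (W : Matrix (Fin d) (Fin d) ℝ) : ℝ :=
  ((Matrix.posSemidef_conjTranspose_mul_self W).1.eigenvectorUnitary.1 *
    Matrix.diagonal (fun i => Real.sqrt
      ((Matrix.posSemidef_conjTranspose_mul_self W).1.eigenvalues i)) *
    (star (Matrix.posSemidef_conjTranspose_mul_self W).1.eigenvectorUnitary :
      Matrix (Fin d) (Fin d) ℝ)).trace

end AttnGF

namespace AttnGF

/-! Under alignment, `V` cancels in `K Qᵀ`, `U_Qᵀ z_i` is a multiple of `e_{π(i)}`, the diagonal
`Λ_K Λ_Qᵀ` keeps it there, and `U_K e_{π(i)}` is the direction of `x_{i,opt(i)}`. So `K Qᵀ z_i` is a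
multiple of `x_{i,opt(i)}`, and paired tokens, whose difference is orthogonal to `x_{i,opt(i)}`,
get the same score. -/

open Matrix

theorem orth_iff_transpose_mul_self {d : ℕ} (U : Matrix (Fin d) (Fin d) ℝ) :
    Orth U ↔ Uᵀ * U = 1 := by
  simp only [Orth, ← Matrix.ext_iff, mul_apply, transpose_apply, one_apply]

theorem eq_mul_mul_transpose_of_apply {d de : ℕ} {M Λ : Matrix (Fin d) (Fin de) ℝ}
    {U : Matrix (Fin d) (Fin d) ℝ} {V : Matrix (Fin de) (Fin de) ℝ}
    (h : ∀ a b, M a b = ∑ j, ∑ m, U a j * Λ j m * V b m) : M = U * Λ * Vᵀ := by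
  ext a b
  simp only [h, mul_apply, transpose_apply, sum_mul]
  exact sum_comm

theorem RectDiag.mul_transpose_mulVec_single {d de : ℕ} {A B : Matrix (Fin d) (Fin de) ℝ}
    (hA : RectDiag A) (hB : RectDiag B) (p : Fin d) :
    (A * Bᵀ) *ᵥ Pi.single p 1 = (A * Bᵀ) p p • Pi.single p 1 := by
  ext a
  rw [mulVec_single_one]
  rcases eq_or_ne a p with rfl | hap
  · simp
  · have hterm : ∀ m : Fin de, A a m * B p m = 0 := fun m => by
      by_cases ham : (a : ℕ) = m
      · rw [hB p m (fun h => hap (Fin.ext (ham.trans h.symm))), mul_zero]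
      · rw [hA a m ham, zero_mul]
    simp [hap, mul_apply, hterm]

theorem eq_l2_smul_of_div_l2_eq {d : ℕ} {x u : Fin d → ℝ} (h : ∀ a, x a / l2 x = u a) :
    x = l2 x • u := by
  by_cases hx : l2 x = 0
  · have hsq : ∑ a, x a ^ 2 = 0 :=
      le_antisymm (Real.sqrt_eq_zero'.mp hx) (sum_nonneg fun a _ => sq_nonneg _)
    ext a
    have := (sum_eq_zero_iff_of_nonneg fun a _ => sq_nonneg (x a)).mp hsq a (mem_univ a)
    simpa [hx] using this
  · ext a
    rw [Pi.smul_apply, smul_eq_mul, ← h a, mul_div_cancel₀ _ hx]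

theorem aligned_mulVec_eq_smul {d de : ℕ} {UK UQ : Matrix (Fin d) (Fin d) ℝ}
    {ΛK ΛQ : Matrix (Fin d) (Fin de) ℝ} {V : Matrix (Fin de) (Fin de) ℝ}
    (hUQ : UQᵀ * UQ = 1) (hV : Vᵀ * V = 1) (hΛK : RectDiag ΛK) (hΛQ : RectDiag ΛQ)
    {x z : Fin d → ℝ} {p : Fin d}
    (hx : ∀ a, x a / l2 x = UK a p) (hz : ∀ a, z a / l2 z = UQ a p) :
    (UK * ΛK * Vᵀ * (UQ * ΛQ * Vᵀ)ᵀ) *ᵥ z = (l2 z * (ΛK * ΛQᵀ) p p / l2 x) • x := by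
  have hmul : UK * ΛK * Vᵀ * (UQ * ΛQ * Vᵀ)ᵀ = UK * (ΛK * ΛQᵀ) * UQᵀ := by
    simp only [transpose_mul, transpose_transpose, Matrix.mul_assoc]
    rw [← Matrix.mul_assoc Vᵀ, hV, Matrix.one_mul]
  have hzcol : UQᵀ *ᵥ z = l2 z • Pi.single p 1 := by
    have hz' : z = l2 z • UQ *ᵥ Pi.single p 1 := by
      rw [mulVec_single_one]
      exact eq_l2_smul_of_div_l2_eq hz
    nth_rw 1 [hz']
    rw [mulVec_smul, mulVec_mulVec, hUQ, one_mulVec]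
  have hxcol : UK *ᵥ Pi.single p 1 = (l2 x)⁻¹ • x := by
    ext a
    rw [mulVec_single_one, col_apply, ← hx a, Pi.smul_apply, smul_eq_mul, div_eq_inv_mul]
  rw [hmul, ← mulVec_mulVec, ← mulVec_mulVec, hzcol, mulVec_smul,
    hΛK.mul_transpose_mulVec_single hΛQ, mulVec_smul, mulVec_smul, hxcol, smul_smul, smul_smul,
    div_eq_mul_inv]

theorem gM_eq_dotProduct_mulVec {n L d de : ℕ} (X : Fin n → Fin L → Fin d → ℝ)
    (z : Fin n → Fin d → ℝ) (i : Fin n) (K Q : Matrix (Fin d) (Fin de) ℝ) (l : Fin L) :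
    gM X z i K Q l = X i l ⬝ᵥ (K * Qᵀ) *ᵥ z i := by
  simp only [gM, dotProduct, mulVec, mul_apply, transpose_apply, mul_sum, sum_mul, mul_assoc]
  exact sum_congr rfl fun a _ => sum_comm

theorem statement17_general {n L d de : ℕ}
    (X : Fin n → Fin L → Fin d → ℝ) (z : Fin n → Fin d → ℝ)
    (opt : Fin n → Fin L)
    (σ : Fin n → Fin L → Fin L) (hB1 : B1 X z opt σ)
    (K Q : Fin d → Fin de → ℝ)
    (UK UQ : Fin d → Fin d → ℝ) (V : Fin de → Fin de → ℝ)
    (hUQ : Orth UQ) (hV : Orth V)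
    (pim : Fin n → Fin d)
    (hcolK : ∀ (i : Fin n) (a : Fin d),
      X i (opt i) a / l2 (X i (opt i)) = UK a (pim i))
    (hcolQ : ∀ (i : Fin n) (a : Fin d),
      z i a / l2 (z i) = UQ a (pim i))
    (ΛK ΛQ : Fin d → Fin de → ℝ) (hΛK : RectDiag ΛK) (hΛQ : RectDiag ΛQ)
    (hK : ∀ (a : Fin d) (b : Fin de),
      K a b = ∑ j, ∑ m, UK a j * ΛK j m * V b m)
    (hQ : ∀ (a : Fin d) (b : Fin de),
      Q a b = ∑ j, ∑ m, UQ a j * ΛQ j m * V b m) :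
    ∀ i : Fin n, ∀ l : Fin L, l ≠ opt i →
      gM X z i K Q l = gM X z i K Q (σ i l) ∧
      S (gM X z i K Q) l = S (gM X z i K Q) (σ i l) := by
  intro i l hl
  obtain ⟨-, -, -, -, -, -, horth, -⟩ := hB1.2.2 i l hl
  have hscore : gM X z i K Q l = gM X z i K Q (σ i l) := by
    rw [← sub_eq_zero, gM_eq_dotProduct_mulVec X z i K Q, gM_eq_dotProduct_mulVec X z i K Q,
      ← sub_dotProduct, eq_mul_mul_transpose_of_apply hK, eq_mul_mul_transpose_of_apply hQ,
      aligned_mulVec_eq_smul ((orth_iff_transpose_mul_self UQ).mp hUQ)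
        ((orth_iff_transpose_mul_self V).mp hV) hΛK hΛQ (hcolK i) (hcolQ i),
      dotProduct_smul, dotProduct_comm]
    simp only [dotProduct, Pi.sub_apply, horth, smul_zero]
  exact ⟨hscore, by rw [S, S, hscore]⟩

/-- under alignment, paired non-optimal tokens get equal attention scores
and equal softmax probabilities. -/
theorem statement17 {n L d de : ℕ}
    (X : Fin n → Fin L → Fin d → ℝ) (z : Fin n → Fin d → ℝ)
    (opt : Fin n → Fin L)
    (σ : Fin n → Fin L → Fin L) (hB1 : B1 X z opt σ)
    (K Q : Fin d → Fin de → ℝ)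
    (UK UQ : Fin d → Fin d → ℝ) (V : Fin de → Fin de → ℝ)
    (hUK : Orth UK) (hUQ : Orth UQ) (hV : Orth V)
    (pim : Fin n → Fin d) (hpim : Function.Injective pim)
    (hcolK : ∀ (i : Fin n) (a : Fin d),
      X i (opt i) a / l2 (X i (opt i)) = UK a (pim i))
    (hcolQ : ∀ (i : Fin n) (a : Fin d),
      z i a / l2 (z i) = UQ a (pim i))
    (ΛK ΛQ : Fin d → Fin de → ℝ) (hΛK : RectDiag ΛK) (hΛQ : RectDiag ΛQ)
    (hK : ∀ (a : Fin d) (b : Fin de),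
      K a b = ∑ j, ∑ m, UK a j * ΛK j m * V b m)
    (hQ : ∀ (a : Fin d) (b : Fin de),
      Q a b = ∑ j, ∑ m, UQ a j * ΛQ j m * V b m) :
    ∀ i : Fin n, ∀ l : Fin L, l ≠ opt i →
      gM X z i K Q l = gM X z i K Q (σ i l) ∧
      S (gM X z i K Q) l = S (gM X z i K Q) (σ i l) :=
  statement17_general X z opt σ hB1 K Q UK UQ V hUQ hV pim hcolK hcolQ ΛK ΛQ hΛK hΛQ hK hQ

end AttnGF
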